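/- arXiv:1305.2714 — 5 statements merged into one kernel-verified Lean document; each statement's English description precedes it below -/
import Mathlib

section
/- Let f : ℝⁿ → ℝ be a convex function, x₀ ∈ ℝⁿ, λ ≥ 0, and let v be a standard Gaussian vector on ℝⁿ. For σ > 0 let prox_f(x₀+σv, σλ) be the unique minimizer over x of (1/2)‖(x₀+σv) − x‖₂² + σλ f(x). Then sup_{σ>0} E[‖prox_f(x₀+σv, σλ) − x₀‖₂²]/σ² = D(λ∂f(x₀)), and the supremum is achieved in the limit σ → 0, i.e. lim_{σ→0} E[‖prox_f(x₀+σv, σλ) − x₀‖₂²]/σ² = D(λ∂f(x₀)). -/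
open MeasureTheory ProbabilityTheory Filter Topology Metric
open scoped RealInnerProductSpace ENNReal Pointwise

noncomputable section

/-- Standard Gaussian measure on `ℝⁿ` (mean zero, identity covariance). -/
def stdGaussian (n : ℕ) : Measure (EuclideanSpace ℝ (Fin n)) :=
  Measure.map (⇑(EuclideanSpace.equiv (Fin n) ℝ).symm)
    (Measure.pi fun _ : Fin n => gaussianReal 0 1)

/-- `D(K)`: mean squared distance of a standard Gaussian vector to `K`. -/
def msd (n : ℕ) (K : Set (EuclideanSpace ℝ (Fin n))) : ℝ :=
  ∫ g, (Metric.infDist g K) ^ 2 ∂(stdGaussian n)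

variable {E : Type*} [NormedAddCommGroup E] [InnerProductSpace ℝ E]

/-- Subdifferential of `f` at `x₀`. -/
def subdiff (f : E → ℝ) (x₀ : E) : Set E :=
  {s | ∀ x, f x₀ + ⟪s, x - x₀⟫ ≤ f x}

/-- Cone generated by a set: `{c • x : c ≥ 0, x ∈ A}`. -/
def coneOf (A : Set E) : Set E :=
  {y | ∃ c : ℝ, 0 ≤ c ∧ ∃ x ∈ A, y = c • x}

/-- Set of feasible directions of `C` at `x₀`. -/
def feasible (C : Set E) (x₀ : E) : Set E := {z | x₀ + z ∈ C}

/-- Tangent cone of `C` at `x₀`: the closure of the cone of feasible directions. -/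
def tangentConeOf (C : Set E) (x₀ : E) : Set E := closure (coneOf (feasible C x₀))

/-- Polar cone of a set `K`. -/
def polarCone (K : Set E) : Set E := {v | ∀ x ∈ K, ⟪v, x⟫ ≤ 0}

open Classical in
/-- Metric projection onto `K` (the unique nearest point when `K` is nonempty,
closed and convex). -/
def projSet (K : Set E) (x : E) : E :=
  if h : ∃ y ∈ K, dist x y = Metric.infDist x K then h.choose else x

/-- Matrix-vector multiplication as a map between Euclidean spaces. -/
def matVec {m n : ℕ} (A : Matrix (Fin m) (Fin n) ℝ) (x : EuclideanSpace ℝ (Fin n)) :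
    EuclideanSpace ℝ (Fin m) :=
  (EuclideanSpace.equiv (Fin m) ℝ).symm (A.mulVec (EuclideanSpace.equiv (Fin n) ℝ x))

/-- Statistical dimension of `K`: `E ‖Proj(g,K)‖²` for standard Gaussian `g`. -/
def statDim (n : ℕ) (K : Set (EuclideanSpace ℝ (Fin n))) : ℝ :=
  ∫ g, ‖projSet K g‖ ^ 2 ∂(stdGaussian n)

end

/-!
Write `K = λ ∂f(x₀)` and `d_σ(w) = (prox(x₀ + σw, σλ) - x₀) / σ`. The optimality condition of the
proximal problem is `x₀ + σw - prox ∈ ∂(σλ f)(prox)`, and `x₀` is the proximal point of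
`x₀ + σλs` for every `s ∈ ∂f(x₀)`; monotonicity of the subdifferential then gives
`‖d_σ(w)‖ ≤ dist(w, K)`, so every normalized error is at most `D(K)`.

As `σ → 0`, `d_σ(w) → e := w - Proj_K(w)`. With `Proj_K(w) = λs`, the optimality condition tested
at `x₀ + σe` bounds `‖e - d_σ(w)‖²` by `λ (f(x₀ + σe) - f(x₀)) / σ - ⟪λs, e⟫`, whose limit
`λ f'(x₀; e) - ⟪λs, e⟫` is `≤ 0`: by the max formula (Hahn–Banach for the sublinear map
`f'(x₀; ·)`) `λ f'(x₀; e)` is a value `⟪λt, e⟫` with `λt ∈ K`, and `λs` maximizes `⟪·, e⟫` on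
`K`. Dominated convergence with the Gaussian-integrable majorant `dist(w, K)²` yields the limit
`D(K)`, which is then also the supremum.
-/

open Set

section Subdifferential

variable {E : Type*} [NormedAddCommGroup E] [InnerProductSpace ℝ E] {f : E → ℝ} {x : E}

theorem convex_subdiff (f : E → ℝ) (x : E) : Convex ℝ (subdiff f x) := by
  intro s₁ hs₁ s₂ hs₂ a b ha hb hab y
  have h₁ := mul_le_mul_of_nonneg_left (hs₁ y) ha
  have h₂ := mul_le_mul_of_nonneg_left (hs₂ y) hb
  rw [inner_add_left, real_inner_smul_left, real_inner_smul_left]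
  linear_combination h₁ + h₂ + (f y - f x) * hab

theorem isClosed_subdiff (f : E → ℝ) (x : E) : IsClosed (subdiff f x) := by
  simp only [subdiff, ofPred_forall]
  exact isClosed_iInter fun y =>
    isClosed_le (continuous_const.add (continuous_id.inner continuous_const)) continuous_const

theorem smul_mem_subdiff_const_mul {s : E} {c : ℝ} (hc : 0 ≤ c) (hs : s ∈ subdiff f x) :
    c • s ∈ subdiff (fun y => c * f y) x := fun y => by
  rw [real_inner_smul_left]
  nlinarith [mul_le_mul_of_nonneg_left (hs y) hc]

theorem sub_mem_subdiff_of_isMinOn (hf : ConvexOn ℝ univ f) {y p : E}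
    (hp : IsMinOn (fun x => (1 / 2) * ‖y - x‖ ^ 2 + f x) univ p) : y - p ∈ subdiff f p := by
  intro x
  have key : ∀ t ∈ Ioo (0 : ℝ) 1, ⟪y - p, x - p⟫ ≤ f x - f p + t / 2 * ‖x - p‖ ^ 2 := by
    rintro t ⟨ht₀, ht₁⟩
    have hmin := isMinOn_iff.1 hp (p + t • (x - p)) (mem_univ _)
    have hconv := hf.2 (mem_univ p) (mem_univ x) (sub_nonneg.2 ht₁.le) ht₀.le (by ring)
    have hseg : (1 - t) • p + t • x = p + t • (x - p) := by module
    have hexp : ‖y - (p + t • (x - p))‖ ^ 2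
        = ‖y - p‖ ^ 2 - 2 * t * ⟪y - p, x - p⟫ + t ^ 2 * ‖x - p‖ ^ 2 := by
      rw [show y - (p + t • (x - p)) = (y - p) - t • (x - p) by abel, norm_sub_sq_real,
        real_inner_smul_right, norm_smul, Real.norm_eq_abs, mul_pow, sq_abs]
      ring
    rw [hseg, smul_eq_mul, smul_eq_mul] at hconv
    simp only [hexp] at hmin
    nlinarith
  have hlim : Tendsto (fun t : ℝ => f x - f p + t / 2 * ‖x - p‖ ^ 2) (𝓝[>] 0)
      (𝓝 (f x - f p)) := by
    have : Continuous (fun t : ℝ => f x - f p + t / 2 * ‖x - p‖ ^ 2) := by fun_prop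
    simpa using (this.tendsto 0).mono_left nhdsWithin_le_nhds
  have := ge_of_tendsto hlim (by filter_upwards [Ioo_mem_nhdsGT one_pos] with t ht using key t ht)
  linarith

theorem norm_sub_le_of_sub_mem_subdiff {y₁ y₂ p₁ p₂ : E} (h₁ : y₁ - p₁ ∈ subdiff f p₁)
    (h₂ : y₂ - p₂ ∈ subdiff f p₂) : ‖p₁ - p₂‖ ≤ ‖y₁ - y₂‖ := by
  have hsum : ‖p₁ - p₂‖ ^ 2 ≤ ⟪y₁ - y₂, p₁ - p₂⟫ := by
    have hid : ⟪y₁ - y₂, p₁ - p₂⟫ - ‖p₁ - p₂‖ ^ 2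
        = -⟪y₁ - p₁, p₂ - p₁⟫ - ⟪y₂ - p₂, p₁ - p₂⟫ := by
      rw [← real_inner_self_eq_norm_sq]
      simp only [inner_sub_left, inner_sub_right, real_inner_comm p₁ p₂]
      ring
    linarith [h₁ p₂, h₂ p₁]
  have hcs := real_inner_le_norm (y₁ - y₂) (p₁ - p₂)
  nlinarith [norm_nonneg (p₁ - p₂), norm_nonneg (y₁ - y₂)]

end Subdifferential

section RightLineDeriv

variable {E : Type*} [NormedAddCommGroup E] [InnerProductSpace ℝ E] {f : E → ℝ} {x : E}

noncomputable def rightLineDeriv (f : E → ℝ) (x v : E) : ℝ :=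
  derivWithin (fun t : ℝ => f (x + t • v)) (Ioi 0) 0

theorem ConvexOn.comp_line (hf : ConvexOn ℝ univ f) (x v : E) :
    ConvexOn ℝ univ (fun t : ℝ => f (x + t • v)) :=
  (hf.translate_right x).comp_linearMap (LinearMap.toSpanSingleton ℝ E v)

theorem ConvexOn.hasDerivWithinAt_rightLineDeriv (hf : ConvexOn ℝ univ f) (x v : E) :
    HasDerivWithinAt (fun t : ℝ => f (x + t • v)) (rightLineDeriv f x v) (Ioi 0) 0 :=
  (hf.comp_line x v).hasDerivWithinAt_rightDeriv_of_mem_interior (by simp)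

theorem ConvexOn.tendsto_slope_rightLineDeriv (hf : ConvexOn ℝ univ f) (x v : E) :
    Tendsto (fun t : ℝ => (f (x + t • v) - f x) / t) (𝓝[>] 0) (𝓝 (rightLineDeriv f x v)) := by
  have := (hasDerivWithinAt_iff_tendsto_slope' (by simp)).1 (hf.hasDerivWithinAt_rightLineDeriv x v)
  refine this.congr fun t => ?_
  simp [slope_def_field]

theorem ConvexOn.rightLineDeriv_le_sub (hf : ConvexOn ℝ univ f) (x v : E) :
    rightLineDeriv f x v ≤ f (x + v) - f x := by
  have := (hf.comp_line x v).rightDeriv_le_slope_of_mem_interior (x := 0) (y := 1) (by simp)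
    (mem_univ _) one_pos
  simpa [rightLineDeriv, slope_def_field] using this

theorem ConvexOn.rightLineDeriv_smul (hf : ConvexOn ℝ univ f) (x v : E) {c : ℝ} (hc : 0 < c) :
    rightLineDeriv f x (c • v) = c * rightLineDeriv f x v := by
  have hscale : HasDerivWithinAt (fun t : ℝ => c * t) c (Ioi 0) 0 := by
    simpa using (hasDerivAt_id (0 : ℝ)).const_mul c |>.hasDerivWithinAt
  have hcomp := (hf.hasDerivWithinAt_rightLineDeriv x v).scomp_of_eq
    (0 : ℝ) hscale (fun t (ht : 0 < t) => mul_pos hc ht) (by simp)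
  have hline : (fun t : ℝ => f (x + t • c • v)) = (fun t => f (x + t • v)) ∘ (fun t => c * t) := by
    funext t
    simp only [Function.comp_apply, smul_smul, mul_comm]
  rw [rightLineDeriv, hline, hcomp.derivWithin (uniqueDiffWithinAt_Ioi 0), smul_eq_mul]

theorem ConvexOn.rightLineDeriv_add_le (hf : ConvexOn ℝ univ f) (x v w : E) :
    rightLineDeriv f x (v + w) ≤ rightLineDeriv f x v + rightLineDeriv f x w := by
  have hdouble : Tendsto (fun t : ℝ => 2 * t) (𝓝[>] 0) (𝓝[>] 0) := by
    refine tendsto_nhdsWithin_of_tendsto_nhds_of_eventually_within _ ?_ ?_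
    · exact ((continuous_const_mul 2).tendsto' 0 0 (mul_zero 2)).mono_left nhdsWithin_le_nhds
    · filter_upwards [self_mem_nhdsWithin] with t (ht : 0 < t) using by simp [ht]
  refine le_of_tendsto_of_tendsto (hf.tendsto_slope_rightLineDeriv x (v + w))
    (((hf.tendsto_slope_rightLineDeriv x v).comp hdouble).add
      ((hf.tendsto_slope_rightLineDeriv x w).comp hdouble)) ?_
  filter_upwards [self_mem_nhdsWithin] with t (ht : 0 < t)
  have hmid := hf.2 (mem_univ (x + (2 * t) • v)) (mem_univ (x + (2 * t) • w))
    (by norm_num : (0 : ℝ) ≤ 1 / 2) (by norm_num : (0 : ℝ) ≤ 1 / 2) (by norm_num)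
  rw [show (1 / 2 : ℝ) • (x + (2 * t) • v) + (1 / 2 : ℝ) • (x + (2 * t) • w) = x + t • (v + w) by
    module, smul_eq_mul, smul_eq_mul] at hmid
  simp only [Function.comp]
  rw [← add_div, div_le_div_iff₀ ht (by positivity)]
  nlinarith

end RightLineDeriv

theorem exists_linearMap_le_sublinear_eq {E : Type*} [AddCommGroup E] [Module ℝ E] (N : E → ℝ)
    (N_hom : ∀ c : ℝ, 0 < c → ∀ x, N (c • x) = c * N x) (N_add : ∀ x y, N (x + y) ≤ N x + N y)
    (v : E) : ∃ g : E →ₗ[ℝ] ℝ, (∀ x, g x ≤ N x) ∧ g v = N v := by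
  have N_zero : N 0 = 0 := by
    have := N_hom 2 two_pos 0
    rw [smul_zero] at this
    linarith
  have hline : ∀ c : ℝ, c * N v ≤ N (c • v) := by
    intro c
    rcases lt_trichotomy c 0 with hc | rfl | hc
    · have := N_add (c • v) ((-c) • v)
      rw [← add_smul, add_neg_cancel, zero_smul, N_zero, N_hom _ (neg_pos.2 hc)] at this
      linarith
    · simp [N_zero]
    · exact (N_hom c hc v).ge
  have hwd : ∀ c : ℝ, c • v = 0 → c • N v = 0 := by
    intro c hcv
    rcases smul_eq_zero.1 hcv with rfl | rfl
    · exact zero_smul _ _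
    · rw [N_zero, smul_zero]
  let g₀ := LinearPMap.mkSpanSingleton' (σ := RingHom.id ℝ) v (N v) hwd
  have hg₀ : ∀ z : g₀.domain, g₀ z ≤ N z := by
    rintro ⟨z, hz⟩
    rw [LinearPMap.domain_mkSpanSingleton] at hz
    obtain ⟨c, rfl⟩ := Submodule.mem_span_singleton.1 hz
    rw [LinearPMap.mkSpanSingleton'_apply]
    exact hline c
  obtain ⟨g, hg_ext, hg_le⟩ := exists_extension_of_le_sublinear g₀ N N_hom N_add hg₀
  have hv : v ∈ g₀.domain := by
    rw [LinearPMap.domain_mkSpanSingleton]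
    exact Submodule.mem_span_singleton_self v
  refine ⟨g, hg_le, ?_⟩
  rw [hg_ext ⟨v, hv⟩]
  exact LinearPMap.mkSpanSingleton'_apply_self v (N v) hwd hv

section MaxFormula

variable {E : Type*} [NormedAddCommGroup E] [InnerProductSpace ℝ E] [FiniteDimensional ℝ E]
  {f : E → ℝ}

theorem ConvexOn.exists_mem_subdiff_inner_eq_rightLineDeriv (hf : ConvexOn ℝ univ f) (x v : E) :
    ∃ s ∈ subdiff f x, ⟪s, v⟫ = rightLineDeriv f x v := by
  obtain ⟨g, hg_le, hg_v⟩ := exists_linearMap_le_sublinear_eq (rightLineDeriv f x)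
    (fun c hc w => hf.rightLineDeriv_smul x w hc) (hf.rightLineDeriv_add_le x) v
  set s := (InnerProductSpace.toDual ℝ E).symm (LinearMap.toContinuousLinearMap g)
  have hs : ∀ y, ⟪s, y⟫ = g y := fun y => InnerProductSpace.toDual_symm_apply
  refine ⟨s, fun y => ?_, by rw [hs, hg_v]⟩
  have := (hg_le (y - x)).trans (hf.rightLineDeriv_le_sub x (y - x))
  rw [add_sub_cancel] at this
  rw [hs]
  linarith

theorem ConvexOn.subdiff_nonempty (hf : ConvexOn ℝ univ f) (x : E) : (subdiff f x).Nonempty :=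
  let ⟨s, hs, _⟩ := hf.exists_mem_subdiff_inner_eq_rightLineDeriv x 0
  ⟨s, hs⟩

end MaxFormula

theorem exists_norm_sub_eq_infDist_of_convex {E : Type*} [NormedAddCommGroup E]
    [InnerProductSpace ℝ E] [CompleteSpace E] {K : Set E} (hne : K.Nonempty)
    (hconv : Convex ℝ K) (hclosed : IsClosed K) (w : E) :
    ∃ u ∈ K, ‖w - u‖ = infDist w K ∧ ∀ v ∈ K, ⟪w - u, v - u⟫ ≤ 0 := by
  obtain ⟨u, huK, hu⟩ := exists_norm_eq_iInf_of_complete_convex hne hclosed.isComplete hconv w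
  refine ⟨u, huK, ?_, (norm_eq_iInf_iff_real_inner_le_zero hconv huK).1 hu⟩
  rw [hu, infDist_eq_iInf]
  simp only [dist_eq_norm]

section Prox

variable {E : Type*} [NormedAddCommGroup E] [InnerProductSpace ℝ E] {f : E → ℝ} {x₀ w p : E}
  {lam σ : ℝ}

theorem norm_sub_le_of_isMinOn_prox (hf : ConvexOn ℝ univ f) (hlam : 0 ≤ lam) (hσ : 0 < σ)
    (hp : IsMinOn (fun x => (1 / 2) * ‖(x₀ + σ • w) - x‖ ^ 2 + σ * lam * f x) univ p)
    {s : E} (hs : s ∈ subdiff f x₀) : ‖p - x₀‖ ≤ σ * ‖w - lam • s‖ := by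
  have hτ : 0 ≤ σ * lam := mul_nonneg hσ.le hlam
  have h₁ := sub_mem_subdiff_of_isMinOn (hf.smul hτ) hp
  have h₂ : (x₀ + (σ * lam) • s) - x₀ ∈ subdiff (fun x => σ * lam * f x) x₀ := by
    rw [add_sub_cancel_left]
    exact smul_mem_subdiff_const_mul hτ hs
  calc ‖p - x₀‖ ≤ ‖(x₀ + σ • w) - (x₀ + (σ * lam) • s)‖ := norm_sub_le_of_sub_mem_subdiff h₁ h₂
    _ = σ * ‖w - lam • s‖ := by
      rw [add_sub_add_left_eq_sub, mul_smul, ← smul_sub, norm_smul, Real.norm_of_nonneg hσ.le]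

theorem norm_sub_inv_smul_sq_le_of_isMinOn_prox (hf : ConvexOn ℝ univ f) (hlam : 0 ≤ lam)
    (hσ : 0 < σ)
    (hp : IsMinOn (fun x => (1 / 2) * ‖(x₀ + σ • w) - x‖ ^ 2 + σ * lam * f x) univ p)
    {s : E} (hs : s ∈ subdiff f x₀) :
    ‖(w - lam • s) - σ⁻¹ • (p - x₀)‖ ^ 2
      ≤ lam * ((f (x₀ + σ • (w - lam • s)) - f x₀) / σ) - ⟪lam • s, w - lam • s⟫ := by
  set e := w - lam • s
  set d := σ⁻¹ • (p - x₀)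
  have hpd : p = x₀ + σ • d := by simp [d, smul_inv_smul₀ hσ.ne']
  have hvar := sub_mem_subdiff_of_isMinOn (hf.smul (mul_nonneg hσ.le hlam)) hp (x₀ + σ • e)
  have hsub := mul_le_mul_of_nonneg_left (hs p) hlam
  rw [hpd, add_sub_add_left_eq_sub, add_sub_add_left_eq_sub, ← smul_sub, ← smul_sub,
    real_inner_smul_left, real_inner_smul_right, smul_eq_mul, smul_eq_mul] at hvar
  rw [hpd, add_sub_cancel_left, real_inner_smul_right] at hsub
  have hid : ⟪w - d, e - d⟫ + lam * ⟪s, d⟫ = ‖e - d‖ ^ 2 + ⟪lam • s, e⟫ := by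
    rw [show w - d = (e - d) + lam • s by simp only [e]; abel, inner_add_left,
      real_inner_self_eq_norm_sq, real_inner_smul_left, real_inner_smul_left, inner_sub_right]
    ring
  rw [le_sub_iff_add_le, ← hid, ← mul_div_assoc, le_div_iff₀ hσ]
  nlinarith

theorem lipschitzWith_of_isMinOn_prox (hf : ConvexOn ℝ univ f) (hlam : 0 ≤ lam) (hσ : 0 < σ)
    {P : E → E}
    (hP : ∀ w, IsMinOn (fun x => (1 / 2) * ‖(x₀ + σ • w) - x‖ ^ 2 + σ * lam * f x) univ (P w)) :
    LipschitzWith (Real.toNNReal σ) P := by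
  have hτ : 0 ≤ σ * lam := mul_nonneg hσ.le hlam
  refine LipschitzWith.of_dist_le_mul fun w₁ w₂ => ?_
  rw [dist_eq_norm, dist_eq_norm, Real.coe_toNNReal _ hσ.le]
  calc ‖P w₁ - P w₂‖ ≤ ‖(x₀ + σ • w₁) - (x₀ + σ • w₂)‖ :=
        norm_sub_le_of_sub_mem_subdiff (sub_mem_subdiff_of_isMinOn (hf.smul hτ) (hP w₁))
          (sub_mem_subdiff_of_isMinOn (hf.smul hτ) (hP w₂))
    _ = σ * ‖w₁ - w₂‖ := by
      rw [add_sub_add_left_eq_sub, ← smul_sub, norm_smul, Real.norm_of_nonneg hσ.le]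

end Prox

section ProxFiniteDimensional

variable {E : Type*} [NormedAddCommGroup E] [InnerProductSpace ℝ E] [FiniteDimensional ℝ E]
  {f : E → ℝ} {x₀ w : E} {lam : ℝ}

theorem norm_sub_sq_div_sq_le_of_isMinOn_prox (hf : ConvexOn ℝ univ f) (hlam : 0 ≤ lam) {σ : ℝ}
    (hσ : 0 < σ) {p : E}
    (hp : IsMinOn (fun x => (1 / 2) * ‖(x₀ + σ • w) - x‖ ^ 2 + σ * lam * f x) univ p) :
    ‖p - x₀‖ ^ 2 / σ ^ 2 ≤ infDist w (lam • subdiff f x₀) ^ 2 := by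
  have hK : (lam • subdiff f x₀).Nonempty := (hf.subdiff_nonempty x₀).smul_set
  have hle : ‖p - x₀‖ / σ ≤ infDist w (lam • subdiff f x₀) := by
    refine (le_infDist hK).2 ?_
    rintro _ ⟨s, hs, rfl⟩
    rw [dist_eq_norm, div_le_iff₀' hσ]
    exact norm_sub_le_of_isMinOn_prox hf hlam hσ hp hs
  rw [← div_pow]
  exact pow_le_pow_left₀ (by positivity) hle 2

theorem tendsto_norm_sub_sq_div_sq_of_isMinOn_prox (hf : ConvexOn ℝ univ f) (hlam : 0 ≤ lam)
    {P : ℝ → E}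
    (hP : ∀ σ, 0 < σ → IsMinOn (fun x => (1 / 2) * ‖(x₀ + σ • w) - x‖ ^ 2 + σ * lam * f x)
      univ (P σ)) :
    Tendsto (fun σ => ‖P σ - x₀‖ ^ 2 / σ ^ 2) (𝓝[>] 0)
      (𝓝 (infDist w (lam • subdiff f x₀) ^ 2)) := by
  obtain ⟨_, ⟨s, hs, rfl⟩, hdist, hnearest⟩ := exists_norm_sub_eq_infDist_of_convex
    (hf.subdiff_nonempty x₀).smul_set ((convex_subdiff f x₀).smul lam)
    ((isClosed_subdiff f x₀).smul₀ lam) w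
  set e := w - lam • s
  have hderiv : lam * rightLineDeriv f x₀ e ≤ ⟪lam • s, e⟫ := by
    obtain ⟨t, ht, hte⟩ := hf.exists_mem_subdiff_inner_eq_rightLineDeriv x₀ e
    have := hnearest (lam • t) (smul_mem_smul_set ht)
    rw [← hte, ← real_inner_smul_left]
    simp only [inner_sub_right] at this
    linarith [real_inner_comm e (lam • t), real_inner_comm e (lam • s)]
  have hsq : Tendsto (fun σ => ‖e - σ⁻¹ • (P σ - x₀)‖ ^ 2) (𝓝[>] 0) (𝓝 0) := by
    have hupper := ((hf.tendsto_slope_rightLineDeriv x₀ e).const_mul lam).sub_const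
      ⟪lam • s, e⟫ |>.max (tendsto_const_nhds (x := (0 : ℝ)))
    rw [max_eq_right (by linarith)] at hupper
    refine squeeze_zero' (Eventually.of_forall fun σ => sq_nonneg _) ?_ hupper
    filter_upwards [self_mem_nhdsWithin] with σ (hσ : 0 < σ)
    exact le_max_of_le_left (norm_sub_inv_smul_sq_le_of_isMinOn_prox hf hlam hσ (hP σ hσ) hs)
  have hconv : Tendsto (fun σ => σ⁻¹ • (P σ - x₀)) (𝓝[>] 0) (𝓝 e) := by
    rw [tendsto_iff_norm_sub_tendsto_zero]
    simpa [norm_sub_rev, Real.sqrt_sq] using hsq.sqrt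
  rw [← hdist]
  refine (((continuous_norm.tendsto e).pow 2).comp hconv).congr fun σ => ?_
  rw [Function.comp_apply, norm_smul, norm_inv, Real.norm_eq_abs, inv_mul_eq_div, div_pow, sq_abs]

end ProxFiniteDimensional

theorem memLp_infDist {E : Type*} [NormedAddCommGroup E] [MeasurableSpace E] {μ : Measure E}
    [IsFiniteMeasure μ] {p : ℝ≥0∞} (h : MemLp id p μ) (K : Set E) :
    MemLp (fun w => infDist w K) p μ := by
  have hlip : LipschitzWith 1 (fun w => infDist w K - infDist 0 K) := by
    simpa using (lipschitz_infDist_pt K).sub (LipschitzWith.const (infDist (0 : E) K))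
  convert (hlip.comp_memLp (by simp) h).add (memLp_const (infDist (0 : E) K)) using 1
  ext w
  simp

theorem stdGaussian_eq (n : ℕ) :
    stdGaussian n = ProbabilityTheory.stdGaussian (EuclideanSpace ℝ (Fin n)) := by
  rw [← map_pi_eq_stdGaussian]
  rfl

/-- Worst case NMSE of proximal denoising.
For convex `f`, `λ ≥ 0` and standard Gaussian noise, the supremum over `σ > 0` of the
normalized MSE of the proximity operator equals `D(λ ∂f(x₀))`, and it is attained in the
limit `σ → 0`. -/
theorem statement0 {n : ℕ} (f : EuclideanSpace ℝ (Fin n) → ℝ)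
    (hf : ConvexOn ℝ Set.univ f) (x₀ : EuclideanSpace ℝ (Fin n))
    (lam : ℝ) (hlam : 0 ≤ lam)
    (prox : ℝ → EuclideanSpace ℝ (Fin n) → EuclideanSpace ℝ (Fin n))
    (hprox : ∀ σ : ℝ, 0 < σ → ∀ w,
      IsMinOn (fun x => (1 / 2) * ‖(x₀ + σ • w) - x‖ ^ 2 + σ * lam * f x)
        Set.univ (prox σ w)) :
    IsLUB {e : ℝ | ∃ σ : ℝ, 0 < σ ∧
        e = (∫ w, ‖prox σ w - x₀‖ ^ 2 ∂(stdGaussian n)) / σ ^ 2}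
      (msd n (lam • subdiff f x₀)) ∧
    Tendsto (fun σ : ℝ => (∫ w, ‖prox σ w - x₀‖ ^ 2 ∂(stdGaussian n)) / σ ^ 2)
      (nhdsWithin 0 (Set.Ioi 0)) (nhds (msd n (lam • subdiff f x₀))) := by
  set K := lam • subdiff f x₀
  have hbound : ∀ σ, 0 < σ → ∀ w, ‖prox σ w - x₀‖ ^ 2 / σ ^ 2 ≤ infDist w K ^ 2 :=
    fun σ hσ w => norm_sub_sq_div_sq_le_of_isMinOn_prox hf hlam hσ (hprox σ hσ w)
  have hmeas : ∀ σ, 0 < σ →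
      AEStronglyMeasurable (fun w => ‖prox σ w - x₀‖ ^ 2 / σ ^ 2) (stdGaussian n) := fun σ hσ =>
    (((lipschitzWith_of_isMinOn_prox hf hlam hσ (hprox σ hσ)).continuous.sub
      continuous_const).norm.pow 2 |>.div_const _).aestronglyMeasurable
  have hint : Integrable (fun w => infDist w K ^ 2) (stdGaussian n) := by
    rw [stdGaussian_eq]
    exact (memLp_infDist IsGaussian.memLp_two_id K).integrable_sq
  have hdom : ∀ σ, 0 < σ → ∀ w, ‖‖prox σ w - x₀‖ ^ 2 / σ ^ 2‖ ≤ infDist w K ^ 2 :=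
    fun σ hσ w => by rw [Real.norm_of_nonneg (by positivity)]; exact hbound σ hσ w
  have hlim : Tendsto (fun σ : ℝ => (∫ w, ‖prox σ w - x₀‖ ^ 2 ∂(stdGaussian n)) / σ ^ 2)
      (𝓝[>] 0) (𝓝 (msd n K)) := by
    simp_rw [← integral_div]
    refine tendsto_integral_filter_of_dominated_convergence _
      (eventually_nhdsWithin_of_forall hmeas)
      (eventually_nhdsWithin_of_forall fun σ hσ => Eventually.of_forall (hdom σ hσ)) hint
      (Eventually.of_forall fun w => ?_)
    exact tendsto_norm_sub_sq_div_sq_of_isMinOn_prox hf hlam fun σ hσ => hprox σ hσ w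
  refine ⟨⟨?_, fun b hb => le_of_tendsto hlim ?_⟩, hlim⟩
  · rintro _ ⟨σ, hσ, rfl⟩
    rw [← integral_div]
    exact integral_mono (hint.mono' (hmeas σ hσ) (Eventually.of_forall (hdom σ hσ))) hint
      (hbound σ hσ)
  · filter_upwards [self_mem_nhdsWithin] with σ hσ
    exact hb ⟨σ, hσ, rfl⟩
end

section
/- Let C ⊆ ℝⁿ be a nonempty, closed and convex set, f : ℝⁿ → ℝ a convex function, x₀ ∈ C, λ ≥ 0, σ > 0, and let v be a standard Gaussian vector on ℝⁿ. Let x* be the unique minimizer over x ∈ C of σλ f(x) + (1/2)‖(x₀+σv) − x‖₂². Then E[‖x* − x₀‖₂²]/σ² ≤ D(λ∂f(x₀) + T_C(x₀)*), where the sum denotes the Minkowski sum of sets. -/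
open MeasureTheory ProbabilityTheory Filter Topology Metric
open scoped RealInnerProductSpace ENNReal Pointwise

/-!
Fix `w` and `k = λ s + u` with `s ∈ ∂f(x₀)` and `u ∈ T_C(x₀)*`, and write `e = x* - x₀`.
The first-order optimality condition of the proximal problem at `x*`, tested against the
feasible point `x₀`, combined with the subgradient inequality for `s` and with
`⟪u, e⟫ ≤ 0`, gives `‖e‖² ≤ σ ⟪w - k, e⟫`, hence `‖e‖ ≤ σ ‖w - k‖`. Taking the infimum over `k`
yields `‖e‖ ≤ σ dist(w, λ∂f(x₀) + T_C(x₀)*)`, and integrating against the Gaussian gives the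
bound. The set is nonempty because a convex function on `ℝⁿ` is continuous and so has a
subgradient: separate `(x₀, f x₀)` from its open strict epigraph.
-/

theorem ConvexOn.exists_strongDual_le_sub {E : Type*} [NormedAddCommGroup E] [NormedSpace ℝ E]
    {f : E → ℝ} (hf : ConvexOn ℝ Set.univ f) (hfc : Continuous f) (x₀ : E) :
    ∃ g : StrongDual ℝ E, ∀ x, g (x - x₀) ≤ f x - f x₀ := by
  have hopen : IsOpen {p : E × ℝ | p.1 ∈ Set.univ ∧ f p.1 < p.2} := by
    simpa only [Set.mem_univ, true_and] using
      (isOpen_lt (hfc.comp continuous_fst) continuous_snd : IsOpen {p : E × ℝ | f p.1 < p.2})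
  obtain ⟨l, hl⟩ := geometric_hahn_banach_open_point hf.convex_strict_epigraph hopen
    (by simp : (x₀, f x₀) ∉ {p : E × ℝ | p.1 ∈ Set.univ ∧ f p.1 < p.2})
  have hsplit : ∀ x t, l (x, t) = l (x, 0) + t * l (0, 1) := fun x t => by
    rw [← smul_eq_mul, ← map_smul, ← map_add, Prod.smul_mk, smul_zero, smul_eq_mul, mul_one,
      Prod.mk_add_mk, add_zero, zero_add]
  have hc : l (0, 1) < 0 := by
    have := hl (x₀, f x₀ + 1) ⟨Set.mem_univ _, lt_add_one _⟩
    rw [hsplit, hsplit x₀ (f x₀)] at this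
    linarith
  -- `(x, f x)` is a limit of points `(x, t)`, `t > f x`, of the strict epigraph.
  have hle : ∀ x, l (x, f x) ≤ l (x₀, f x₀) := fun x => by
    have hclosed : IsClosed {t : ℝ | l (x, t) ≤ l (x₀, f x₀)} :=
      isClosed_le (by fun_prop) continuous_const
    have hIoi : Set.Ioi (f x) ⊆ {t | l (x, t) ≤ l (x₀, f x₀)} :=
      fun t ht => (hl (x, t) ⟨Set.mem_univ _, ht⟩).le
    exact hclosed.closure_subset_iff.2 hIoi (closure_Ioi (f x) ▸ Set.mem_Ici.2 le_rfl)
  refine ⟨(-l (0, 1))⁻¹ • l.comp (ContinuousLinearMap.inl ℝ E ℝ), fun x => ?_⟩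
  have hx := hle x
  rw [hsplit, hsplit x₀] at hx
  change (-l (0, 1))⁻¹ * l (x - x₀, 0) ≤ f x - f x₀
  rw [inv_mul_le_iff₀ (neg_pos.2 hc), show (x - x₀, (0 : ℝ)) = (x, 0) - (x₀, 0) by simp, map_sub]
  linarith

theorem ConvexOn.subdiff_nonempty_s3 {E : Type*} [NormedAddCommGroup E] [InnerProductSpace ℝ E]
    [FiniteDimensional ℝ E] {f : E → ℝ} (hf : ConvexOn ℝ Set.univ f) (x₀ : E) :
    (subdiff f x₀).Nonempty := by
  obtain ⟨g, hg⟩ := hf.exists_strongDual_le_sub hf.locallyLipschitz.continuous x₀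
  refine ⟨(InnerProductSpace.toDual ℝ E).symm g, fun x => ?_⟩
  rw [InnerProductSpace.toDual_symm_apply]
  linarith [hg x]

section Cones

variable {E : Type*} [NormedAddCommGroup E] [InnerProductSpace ℝ E]

theorem sub_mem_tangentConeOf {C : Set E} {x₀ x : E} (hx : x ∈ C) :
    x - x₀ ∈ tangentConeOf C x₀ :=
  subset_closure ⟨1, zero_le_one, x - x₀, by simpa [feasible] using hx, (one_smul ℝ _).symm⟩

theorem zero_mem_polarCone (K : Set E) : (0 : E) ∈ polarCone K :=
  fun x _ => by rw [inner_zero_left]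

theorem inner_sub_le_of_mem_smul_subdiff_add_polarCone {C : Set E} {f : E → ℝ} {x₀ x k : E}
    {lam : ℝ} (hlam : 0 ≤ lam)
    (hk : k ∈ lam • subdiff f x₀ + polarCone (tangentConeOf C x₀)) (hx : x ∈ C) :
    ⟪k, x - x₀⟫ ≤ lam * (f x - f x₀) := by
  obtain ⟨_, ⟨s, hs, rfl⟩, u, hu, rfl⟩ := hk
  have hsub : ⟪s, x - x₀⟫ ≤ f x - f x₀ := by linarith [hs x]
  have hpolar : ⟪u, x - x₀⟫ ≤ 0 := hu _ (sub_mem_tangentConeOf hx)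
  rw [inner_add_left, real_inner_smul_left]
  nlinarith

end Cones

theorem le_of_forall_le_add_mul {a b c : ℝ} (h : ∀ t ∈ Set.Ioc (0 : ℝ) 1, a ≤ b + t * c) :
    a ≤ b := by
  have hlim : Tendsto (fun t => b + t * c) (𝓝[>] 0) (𝓝 b) :=
    ((by fun_prop : Continuous fun t : ℝ => b + t * c).tendsto' 0 b (by simp)).mono_left
      nhdsWithin_le_nhds
  exact ge_of_tendsto hlim (eventually_of_mem (Ioc_mem_nhdsGT one_pos) h)

section Prox

variable {E : Type*} [NormedAddCommGroup E] [InnerProductSpace ℝ E]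

theorem IsMinOn.inner_sub_le_of_convexOn {C : Set E} {g : E → ℝ} (hg : ConvexOn ℝ C g)
    {y xs z : E} (hxs : xs ∈ C) (hz : z ∈ C)
    (hmin : IsMinOn (fun x => g x + 1 / 2 * ‖y - x‖ ^ 2) C xs) :
    ⟪y - xs, z - xs⟫ ≤ g z - g xs := by
  refine le_of_forall_le_add_mul (c := ‖z - xs‖ ^ 2 / 2) fun t ⟨ht0, ht1⟩ => ?_
  have hseg : xs + t • (z - xs) = (1 - t) • xs + t • z := by module
  have hmem : xs + t • (z - xs) ∈ C := hseg ▸ hg.1 hxs hz (by linarith) ht0.le (by ring)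
  have hgt : g (xs + t • (z - xs)) ≤ (1 - t) * g xs + t * g z :=
    hseg ▸ hg.2 hxs hz (by linarith) ht0.le (by ring)
  have hnorm : ‖y - (xs + t • (z - xs))‖ ^ 2 =
      ‖y - xs‖ ^ 2 - 2 * (t * ⟪y - xs, z - xs⟫) + t ^ 2 * ‖z - xs‖ ^ 2 := by
    rw [sub_add_eq_sub_sub, norm_sub_sq_real, real_inner_smul_right, norm_smul,
      Real.norm_of_nonneg ht0.le, mul_pow]
  have hcmp := isMinOn_iff.mp hmin _ hmem
  have : t * ⟪y - xs, z - xs⟫ ≤ t * (g z - g xs + t * (‖z - xs‖ ^ 2 / 2)) := by nlinarith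
  exact le_of_mul_le_mul_left this ht0

theorem norm_sub_le_of_isMinOn_of_mem_smul_subdiff_add_polarCone {C : Set E} {f : E → ℝ}
    (hf : ConvexOn ℝ C f) {x₀ w xs k : E} (hx₀ : x₀ ∈ C) {lam σ : ℝ} (hlam : 0 ≤ lam)
    (hσ : 0 < σ) (hxs : xs ∈ C)
    (hmin : IsMinOn (fun x => σ * lam * f x + 1 / 2 * ‖(x₀ + σ • w) - x‖ ^ 2) C xs)
    (hk : k ∈ lam • subdiff f x₀ + polarCone (tangentConeOf C x₀)) :
    ‖xs - x₀‖ ≤ σ * ‖w - k‖ := by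
  have hopt : ⟪x₀ + σ • w - xs, x₀ - xs⟫ ≤ σ * lam * f x₀ - σ * lam * f xs :=
    hmin.inner_sub_le_of_convexOn (g := fun x => σ * lam * f x)
      (hf.smul (mul_nonneg hσ.le hlam)) hxs hx₀
  have hk' := inner_sub_le_of_mem_smul_subdiff_add_polarCone hlam hk hxs
  have hexpand : ⟪x₀ + σ • w - xs, x₀ - xs⟫ = ‖xs - x₀‖ ^ 2 - σ * ⟪w, xs - x₀⟫ := by
    rw [show x₀ + σ • w - xs = σ • w - (xs - x₀) by abel, ← neg_sub xs x₀, inner_neg_right,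
      inner_sub_left, real_inner_smul_left, real_inner_self_eq_norm_sq]
    ring
  have hsq : ‖xs - x₀‖ ^ 2 ≤ σ * ‖w - k‖ * ‖xs - x₀‖ := by
    have hcs := real_inner_le_norm (w - k) (xs - x₀)
    rw [inner_sub_left] at hcs
    nlinarith
  by_contra! h
  have hpos : 0 < ‖xs - x₀‖ := (by positivity : 0 ≤ σ * ‖w - k‖).trans_lt h
  nlinarith [mul_lt_mul_of_pos_right h hpos]

end Prox

theorem integrable_infDist_sq {E : Type*} [NormedAddCommGroup E] [MeasurableSpace E]
    [OpensMeasurableSpace E] {μ : Measure E} [IsFiniteMeasure μ] (hμ : MemLp id 2 μ)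
    {K : Set E} (hK : K.Nonempty) :
    Integrable (fun w => infDist w K ^ 2) μ := by
  obtain ⟨k, hk⟩ := hK
  refine ((hμ.sub (memLp_const k)).integrable_norm_pow two_ne_zero).mono'
    ((continuous_infDist_pt K).pow 2).aestronglyMeasurable (.of_forall fun w => ?_)
  rw [Real.norm_of_nonneg (by positivity), Pi.sub_apply, id, ← dist_eq_norm]
  exact pow_le_pow_left₀ infDist_nonneg (infDist_le_dist_of_mem hk) 2

theorem stdGaussian_eq_stdGaussian_euclideanSpace (n : ℕ) :
    _root_.stdGaussian n = ProbabilityTheory.stdGaussian (EuclideanSpace ℝ (Fin n)) := by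
  rw [← map_pi_eq_stdGaussian]
  rfl

theorem statement3_general {n : ℕ} (C : Set (EuclideanSpace ℝ (Fin n)))
    (hCconv : Convex ℝ C)
    (f : EuclideanSpace ℝ (Fin n) → ℝ) (hf : ConvexOn ℝ Set.univ f)
    (x₀ : EuclideanSpace ℝ (Fin n)) (hx₀ : x₀ ∈ C)
    (lam : ℝ) (hlam : 0 ≤ lam) (σ : ℝ) (hσ : 0 < σ)
    (xstar : EuclideanSpace ℝ (Fin n) → EuclideanSpace ℝ (Fin n))
    (hxstar : ∀ w, xstar w ∈ C ∧
      IsMinOn (fun x => σ * lam * f x + (1 / 2) * ‖(x₀ + σ • w) - x‖ ^ 2) C (xstar w)) :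
    (∫ w, ‖xstar w - x₀‖ ^ 2 ∂(stdGaussian n)) / σ ^ 2 ≤
      msd n (lam • subdiff f x₀ + polarCone (tangentConeOf C x₀)) := by
  set K := lam • subdiff f x₀ + polarCone (tangentConeOf C x₀)
  have hK : K.Nonempty := (hf.subdiff_nonempty_s3 x₀).smul_set.add ⟨0, zero_mem_polarCone _⟩
  have hpt : ∀ w, ‖xstar w - x₀‖ ^ 2 ≤ σ ^ 2 * infDist w K ^ 2 := fun w => by
    have hdist : ‖xstar w - x₀‖ ≤ σ * infDist w K := by
      rw [← div_le_iff₀' hσ, le_infDist hK]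
      intro k hk
      rw [div_le_iff₀' hσ, dist_eq_norm]
      exact norm_sub_le_of_isMinOn_of_mem_smul_subdiff_add_polarCone
        (hf.subset (Set.subset_univ C) hCconv) hx₀ hlam hσ (hxstar w).1 (hxstar w).2 hk
    rw [← mul_pow]
    exact pow_le_pow_left₀ (norm_nonneg _) hdist 2
  have hint : Integrable (fun w => infDist w K ^ 2) (stdGaussian n) := by
    rw [stdGaussian_eq_stdGaussian_euclideanSpace]
    exact integrable_infDist_sq IsGaussian.memLp_two_id hK
  rw [div_le_iff₀ (by positivity), msd, mul_comm, ← integral_const_mul]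
  exact integral_mono_of_nonneg (.of_forall fun w => by positivity) (hint.const_mul _)
    (.of_forall hpt)

/-- General upper bound for constrained-and-regularized denoising.
For any `σ > 0` and `λ ≥ 0`, the NMSE of the minimizer of
`σλ f(x) + ½‖(x₀+σv) − x‖²` over `C` is at most `D(λ∂f(x₀) + T_C(x₀)*)`. -/
theorem statement3 {n : ℕ} (C : Set (EuclideanSpace ℝ (Fin n)))
    (hCne : C.Nonempty) (hCcl : IsClosed C) (hCconv : Convex ℝ C)
    (f : EuclideanSpace ℝ (Fin n) → ℝ) (hf : ConvexOn ℝ Set.univ f)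
    (x₀ : EuclideanSpace ℝ (Fin n)) (hx₀ : x₀ ∈ C)
    (lam : ℝ) (hlam : 0 ≤ lam) (σ : ℝ) (hσ : 0 < σ)
    (xstar : EuclideanSpace ℝ (Fin n) → EuclideanSpace ℝ (Fin n))
    (hxstar : ∀ w, xstar w ∈ C ∧
      IsMinOn (fun x => σ * lam * f x + (1 / 2) * ‖(x₀ + σ • w) - x‖ ^ 2) C (xstar w)) :
    (∫ w, ‖xstar w - x₀‖ ^ 2 ∂(stdGaussian n)) / σ ^ 2 ≤
      msd n (lam • subdiff f x₀ + polarCone (tangentConeOf C x₀)) :=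
  statement3_general C hCconv f hf x₀ hx₀ lam hlam σ hσ xstar hxstar
end

section
/- Let f : ℝⁿ → ℝ be a convex function, C ⊆ ℝⁿ a nonempty, closed and convex set, x₀ ∈ C, τ ≥ 0, and y = x₀ + z for some z ∈ ℝⁿ. Consider the problem min_{x∈C} τ f(x) + (1/2)‖y − x‖₂². A point x* ∈ C is the unique optimal solution if and only if there exist s ∈ ∂f(x*) and u ∈ T_C(x*)* such that τs + u + x* = y. -/
open MeasureTheory ProbabilityTheory Filter Topology Metric
open scoped RealInnerProductSpace ENNReal Pointwise Matrix

/-- Borel/product measurable structure on real matrices. -/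
instance matrixMeasurableSpace {m n : ℕ} : MeasurableSpace (Matrix (Fin m) (Fin n) ℝ) :=
  (inferInstance : MeasurableSpace (Fin m → Fin n → ℝ))

section AuxSep


variable {n : ℕ}

local notation "Eu" => EuclideanSpace ℝ (Fin n)

/-- Sandwich lemma via Hahn–Banach separation: if a linear functional `⟪w,·⟫` is dominated
by a convex function `g` (with `g 0 = 0`) on a convex set `F ∋ 0`, then there is a vector `p`
with `⟪p,·⟫ ≤ g` everywhere and `⟪w,·⟫ ≤ ⟪p,·⟫` on `F`. -/
lemma sandwich_sep (g : Eu → ℝ) (hg : ConvexOn ℝ Set.univ g) (hg0 : g 0 = 0)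
    (F : Set Eu) (hF : Convex ℝ F) (h0F : (0 : Eu) ∈ F)
    (w : Eu) (hw : ∀ d ∈ F, ⟪w, d⟫ ≤ g d) :
    ∃ p : Eu, (∀ d, ⟪p, d⟫ ≤ g d) ∧ ∀ d ∈ F, ⟪w, d⟫ ≤ ⟪p, d⟫ := by
  have hgc : Continuous g := by
    have := hg.continuousOn isOpen_univ
    exact continuousOn_univ.mp this
  set A : Set (Eu × ℝ) := {q | g q.1 < q.2} with hA
  set B : Set (Eu × ℝ) := {q | q.1 ∈ F ∧ q.2 ≤ ⟪w, q.1⟫} with hB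
  have hAopen : IsOpen A := isOpen_lt (hgc.comp continuous_fst) continuous_snd
  have hAconv : Convex ℝ A := by
    rintro ⟨d1, r1⟩ h1 ⟨d2, r2⟩ h2 a b ha hb hab
    simp only [hA, Set.mem_setOf_eq] at h1 h2 ⊢
    have hle : g (a • d1 + b • d2) ≤ a * g d1 + b * g d2 := by
      have := hg.2 (Set.mem_univ d1) (Set.mem_univ d2) ha hb hab
      simpa [smul_eq_mul] using this
    have h1' : a * g d1 ≤ a * r1 := mul_le_mul_of_nonneg_left h1.le ha
    have h2' : b * g d2 ≤ b * r2 := mul_le_mul_of_nonneg_left h2.le hb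
    rcases ha.lt_or_eq with ha' | ha'
    · have := mul_lt_mul_of_pos_left h1 ha'
      simp only [Prod.smul_mk, Prod.mk_add_mk, smul_eq_mul]
      linarith
    · have hb' : 0 < b := by rw [← ha'] at hab; linarith
      have := mul_lt_mul_of_pos_left h2 hb'
      simp only [Prod.smul_mk, Prod.mk_add_mk, smul_eq_mul]
      linarith
  have hBconv : Convex ℝ B := by
    rintro ⟨d1, r1⟩ ⟨hd1, hr1⟩ ⟨d2, r2⟩ ⟨hd2, hr2⟩ a b ha hb hab
    refine ⟨hF hd1 hd2 ha hb hab, ?_⟩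
    simp only [Prod.smul_mk, Prod.mk_add_mk, smul_eq_mul, inner_add_right,
      real_inner_smul_right]
    have h1' : a * r1 ≤ a * ⟪w, d1⟫ := mul_le_mul_of_nonneg_left hr1 ha
    have h2' : b * r2 ≤ b * ⟪w, d2⟫ := mul_le_mul_of_nonneg_left hr2 hb
    linarith
  have hdisj : Disjoint A B := by
    rw [Set.disjoint_left]
    rintro ⟨d, r⟩ hqA ⟨hdF, hr⟩
    exact absurd (lt_of_lt_of_le hqA (hr.trans (hw d hdF))) (lt_irrefl _)
  obtain ⟨L, c, hLA, hLB⟩ := geometric_hahn_banach_open hAconv hAopen hBconv hdisj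
  set β : ℝ := L ((0 : Eu), (1 : ℝ)) with hβdef
  have hdecomp : ∀ (d : Eu) (r : ℝ), L (d, r) = L (d, 0) + r * β := by
    intro d r
    have h : (d, r) = (d, (0 : ℝ)) + r • ((0 : Eu), (1 : ℝ)) := by
      simp [Prod.ext_iff]
    rw [h, map_add, L.map_smul, smul_eq_mul]
  have hL00 : L ((0 : Eu), (0 : ℝ)) = 0 := by
    have : ((0 : Eu), (0 : ℝ)) = (0 : Eu × ℝ) := rfl
    rw [this, map_zero]
  have hc0 : c ≤ 0 := by
    have := hLB ((0 : Eu), (0 : ℝ)) ⟨h0F, by simp⟩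
    rwa [hL00] at this
  have hAt : ∀ t : ℝ, 0 < t → t * β < c := by
    intro t ht
    have : ((0 : Eu), t) ∈ A := by simp [hA, hg0, ht]
    have := hLA _ this
    rwa [hdecomp, hL00, zero_add] at this
  have hβneg : β < 0 := by
    by_contra h
    push_neg at h
    have := hAt 1 one_pos
    rw [one_mul] at this
    linarith
  have hceq : c = 0 := by
    rcases lt_or_eq_of_le hc0 with hc | hc
    · exfalso
      have ht : (0:ℝ) < c / (2 * β) := div_pos_of_neg_of_neg hc (by linarith)
      have hβne : β ≠ 0 := hβneg.ne
      have := hAt _ ht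
      have h2 : c / (2 * β) * β = c / 2 := by
        field_simp
      rw [h2] at this
      linarith
    · exact hc
  have hβpos : 0 < -β := by linarith
  -- key inequality 1 : ∀ d, L (d,0) + β * g d ≤ 0
  have key1 : ∀ d : Eu, L (d, 0) + β * g d ≤ 0 := by
    intro d
    by_contra h
    push_neg at h
    set δ : ℝ := L (d, 0) + β * g d with hδ
    have hε : (0:ℝ) < δ / (2 * (-β)) := div_pos h (by linarith)
    have hmem : (d, g d + δ / (2 * (-β))) ∈ A := by
      simp only [hA, Set.mem_setOf_eq]
      linarith
    have hexp := hLA _ hmem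
    rw [hdecomp, hceq] at hexp
    have hβne : β ≠ 0 := hβneg.ne
    have hεβ : δ / (2 * (-β)) * β = -(δ / 2) := by
      field_simp
    have hmul : (g d + δ / (2 * (-β))) * β = g d * β + δ / (2 * (-β)) * β := by ring
    rw [hmul, hεβ] at hexp
    linarith
  -- key inequality 2 : ∀ d ∈ F, 0 ≤ L (d,0) + ⟪w,d⟫ * β
  have key2 : ∀ d ∈ F, 0 ≤ L (d, 0) + ⟪w, d⟫ * β := by
    intro d hd
    have hmem : (d, ⟪w, d⟫) ∈ B := ⟨hd, le_rfl⟩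
    have := hLB _ hmem
    rw [hdecomp, hceq] at this
    linarith
  -- build p
  set L1 : Eu →L[ℝ] ℝ := L.comp (ContinuousLinearMap.inl ℝ Eu ℝ) with hL1
  have hL1app : ∀ d : Eu, L1 d = L (d, 0) := fun d => rfl
  set p : Eu := (-β)⁻¹ • (InnerProductSpace.toDual ℝ Eu).symm L1 with hp
  have hpinner : ∀ d : Eu, ⟪p, d⟫ = (-β)⁻¹ * L (d, 0) := by
    intro d
    rw [hp, real_inner_smul_left, InnerProductSpace.toDual_symm_apply, hL1app]
  refine ⟨p, ?_, ?_⟩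
  · intro d
    rw [hpinner]
    have h1 := key1 d
    have : (-β)⁻¹ * L (d, 0) ≤ (-β)⁻¹ * (-β * g d) :=
      mul_le_mul_of_nonneg_left (by linarith) (inv_pos.mpr hβpos).le
    rwa [← mul_assoc, inv_mul_cancel₀ hβpos.ne', one_mul] at this
  · intro d hd
    rw [hpinner]
    have h2 := key2 d hd
    have : (-β)⁻¹ * (-β * ⟪w, d⟫) ≤ (-β)⁻¹ * L (d, 0) :=
      mul_le_mul_of_nonneg_left (by linarith) (inv_pos.mpr hβpos).le
    rwa [← mul_assoc, inv_mul_cancel₀ hβpos.ne', one_mul] at this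

end AuxSep

section AuxMain

variable {n : ℕ}

local notation "Eu" => EuclideanSpace ℝ (Fin n)

/-- If `⟪u, d⟫ ≤ 0` on the feasible set, then `u` is in the polar of the tangent cone. -/
lemma mem_polarCone_of_feasible {C : Set Eu} {x₀ u : Eu}
    (h : ∀ d ∈ feasible C x₀, ⟪u, d⟫ ≤ 0) : u ∈ polarCone (tangentConeOf C x₀) := by
  intro x hx
  have hsub : coneOf (feasible C x₀) ⊆ {v : Eu | ⟪u, v⟫ ≤ 0} := by
    rintro v ⟨c, hc, d, hd, rfl⟩
    rw [Set.mem_setOf_eq, real_inner_smul_right]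
    exact mul_nonpos_of_nonneg_of_nonpos hc (h d hd)
  have hclosed : IsClosed {v : Eu | ⟪u, v⟫ ≤ 0} :=
    isClosed_le (continuous_const.inner continuous_id) continuous_const
  exact closure_minimal hsub hclosed hx

lemma obj_expand (τ : ℝ) (f : Eu → ℝ) (y xs d : Eu) :
    τ * f (xs + d) + (1 / 2) * ‖y - (xs + d)‖ ^ 2
      = (τ * f xs + (1 / 2) * ‖y - xs‖ ^ 2)
        + (τ * (f (xs + d) - f xs) - ⟪y - xs, d⟫ + (1 / 2) * ‖d‖ ^ 2) := by
  have h1 : y - (xs + d) = (y - xs) - d := by abel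
  rw [h1, norm_sub_sq_real]
  ring

end AuxMain

set_option maxHeartbeats 1600000 in
/-- Optimality conditions.
`x* ∈ C` is the unique optimal solution of `min_{x∈C} τ f(x) + ½‖y − x‖²` (with
`y = x₀ + z`) if and only if there exist `s ∈ ∂f(x*)` and `u ∈ T_C(x*)*` with
`τs + u + x* = y`. -/
theorem statement6 {n : ℕ} (f : EuclideanSpace ℝ (Fin n) → ℝ)
    (hf : ConvexOn ℝ Set.univ f)
    (C : Set (EuclideanSpace ℝ (Fin n)))
    (hCne : C.Nonempty) (hCcl : IsClosed C) (hCconv : Convex ℝ C)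
    (x₀ : EuclideanSpace ℝ (Fin n)) (hx₀ : x₀ ∈ C)
    (τ : ℝ) (hτ : 0 ≤ τ) (z y : EuclideanSpace ℝ (Fin n)) (hy : y = x₀ + z)
    (xstar : EuclideanSpace ℝ (Fin n)) (hxstar : xstar ∈ C) :
    (IsMinOn (fun x => τ * f x + (1 / 2) * ‖y - x‖ ^ 2) C xstar ∧
      ∀ x ∈ C, IsMinOn (fun x' => τ * f x' + (1 / 2) * ‖y - x'‖ ^ 2) C x → x = xstar) ↔
    ∃ s ∈ subdiff f xstar, ∃ u ∈ polarCone (tangentConeOf C xstar),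
      τ • s + u + xstar = y := by
  set φ : EuclideanSpace ℝ (Fin n) → ℝ := fun x => τ * f x + (1 / 2) * ‖y - x‖ ^ 2 with hφ
  set w : EuclideanSpace ℝ (Fin n) := y - xstar with hwdef
  clear_value φ w
  constructor
  · rintro ⟨hmin, -⟩
    have hmin' : ∀ x ∈ C, φ xstar ≤ φ x := fun x hx => hmin hx
    -- the function g d = τ (f (x*+d) - f x*) is convex with g 0 = 0
    set g : EuclideanSpace ℝ (Fin n) → ℝ := fun d => τ * (f (xstar + d) - f xstar) with hgdef
    have hg0 : g 0 = 0 := by simp [hgdef]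
    have hgconv : ConvexOn ℝ Set.univ g := by
      refine ⟨convex_univ, ?_⟩
      intro p _ q _ a b ha hb hab
      have hcomb : a • (xstar + p) + b • (xstar + q) = xstar + (a • p + b • q) := by
        rw [smul_add, smul_add]
        rw [show a • xstar + a • p + (b • xstar + b • q)
            = (a • xstar + b • xstar) + (a • p + b • q) by abel, ← add_smul, hab, one_smul]
      have hconv := hf.2 (Set.mem_univ (xstar + p)) (Set.mem_univ (xstar + q)) ha hb hab
      rw [hcomb] at hconv
      simp only [smul_eq_mul] at hconv ⊢
      have hτc := mul_le_mul_of_nonneg_left hconv hτ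
      have hE : a * (τ * (f (xstar + p) - f xstar)) + b * (τ * (f (xstar + q) - f xstar))
          = τ * (a * f (xstar + p) + b * f (xstar + q)) - τ * f xstar := by
        linear_combination (-(τ * f xstar)) * hab
      simp only [hgdef]
      linarith [hτc, hE]
    -- optimality on feasible directions : ⟪w, d⟫ ≤ g d
    have hopt : ∀ d ∈ feasible C xstar, ⟪w, d⟫ ≤ g d := by
      intro d hd
      by_contra hcon
      push_neg at hcon
      set δ : ℝ := ⟪w, d⟫ - g d with hδdef
      have hδ : 0 < δ := by simp only [hδdef]; linarith
      set t : ℝ := min 1 (δ / (‖d‖ ^ 2 + 1)) with htdef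
      have htpos : 0 < t := lt_min one_pos (div_pos hδ (by positivity))
      have ht1 : t ≤ 1 := min_le_left _ _
      -- x* + t • d ∈ C
      have hmem : xstar + t • d ∈ C := by
        have : (1 - t) • xstar + t • (xstar + d) = xstar + t • d := by
          rw [smul_add, sub_smul, one_smul]; abel
        rw [← this]
        exact hCconv hxstar hd (by linarith) htpos.le (by ring)
      have hφle := hmin' _ hmem
      have hexp := obj_expand τ f y xstar (t • d)
      simp only [hφ] at hφle
      rw [hexp] at hφle
      have hkey : 0 ≤ τ * (f (xstar + t • d) - f xstar) - ⟪w, t • d⟫ + (1/2) * ‖t • d‖^2 := by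
        simp only [hwdef]; linarith
      -- convexity : f(x* + t d) - f x* ≤ t (f (x*+d) - f x*)
      have hfc : f (xstar + t • d) - f xstar ≤ t * (f (xstar + d) - f xstar) := by
        have hcomb : (1 - t) • xstar + t • (xstar + d) = xstar + t • d := by
          rw [smul_add, sub_smul, one_smul]; abel
        have := hf.2 (Set.mem_univ xstar) (Set.mem_univ (xstar + d))
          (by linarith : (0:ℝ) ≤ 1 - t) htpos.le (by ring)
        rw [hcomb] at this
        simp only [smul_eq_mul] at this
        nlinarith [this]
      have hin : ⟪w, t • d⟫ = t * ⟪w, d⟫ := real_inner_smul_right _ _ _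
      have hnorm : ‖t • d‖ ^ 2 = t ^ 2 * ‖d‖ ^ 2 := by
        rw [norm_smul]
        simp [abs_of_pos htpos, mul_pow]
      rw [hin, hnorm] at hkey
      have hτf := mul_le_mul_of_nonneg_left hfc hτ
      -- 0 ≤ τ t (f(x*+d)-f x*) - t ⟪w,d⟫ + t²/2 ‖d‖²
      have e1 : t * g d = τ * (t * (f (xstar + d) - f xstar)) := by
        simp only [hgdef]; ring
      have h2 : 0 ≤ t * (g d) - t * ⟪w, d⟫ + (1/2) * (t^2 * ‖d‖^2) := by
        linarith [hkey, hτf, e1]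
      -- divide by t
      have h3 : 0 ≤ g d - ⟪w, d⟫ + (1/2) * (t * ‖d‖^2) := by
        have h2' : t * 0 ≤ t * (g d - ⟪w, d⟫ + (1/2) * (t * ‖d‖^2)) := by
          rw [mul_zero, show t * (g d - ⟪w, d⟫ + (1/2) * (t * ‖d‖^2))
            = t * (g d) - t * ⟪w, d⟫ + (1/2) * (t^2 * ‖d‖^2) from by ring]
          exact h2
        exact le_of_mul_le_mul_left h2' htpos
      -- but t * ‖d‖² < 2 δ
      have ht2 : t * ‖d‖ ^ 2 < 2 * δ := by
        have hle : t ≤ δ / (‖d‖ ^ 2 + 1) := min_le_right _ _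
        have : t * ‖d‖ ^ 2 ≤ (δ / (‖d‖ ^ 2 + 1)) * ‖d‖ ^ 2 :=
          mul_le_mul_of_nonneg_right hle (by positivity)
        have hlt : (δ / (‖d‖ ^ 2 + 1)) * ‖d‖ ^ 2 < 2 * δ := by
          rw [div_mul_eq_mul_div, div_lt_iff₀ (by positivity)]
          nlinarith [sq_nonneg (‖d‖), hδ]
        linarith
      simp only [hδdef] at ht2
      linarith
    have hFconv : Convex ℝ (feasible C xstar) := by
      intro a ha b hb s t hs ht hst
      simp only [feasible, Set.mem_setOf_eq] at *
      have : xstar + (s • a + t • b) = s • (xstar + a) + t • (xstar + b) := by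
        rw [smul_add, smul_add]
        rw [show s • xstar + s • a + (t • xstar + t • b)
            = (s • xstar + t • xstar) + (s • a + t • b) by abel, ← add_smul, hst, one_smul]
      rw [this]
      exact hCconv ha hb hs ht hst
    obtain ⟨p, hp1, hp2⟩ := sandwich_sep g hgconv hg0 (feasible C xstar)
      hFconv (by simp [feasible, hxstar]) w hopt
    rcases eq_or_lt_of_le hτ with hτ0 | hτpos
    · -- τ = 0 : p = 0, u = w, s from subdifferential nonemptiness
      have hgz : ∀ d, g d = 0 := by intro d; simp [hgdef, ← hτ0]
      have hpz : p = 0 := by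
        have h1 := hp1 p
        rw [hgz] at h1
        have := real_inner_self_nonneg (x := p)
        have : ⟪p, p⟫ = 0 := le_antisymm h1 this
        exact inner_self_eq_zero.mp this
      -- subdifferential nonempty
      have hfconv' : ConvexOn ℝ Set.univ (fun d => f (xstar + d) - f xstar) := by
        refine ⟨convex_univ, ?_⟩
        intro a _ b _ sa sb hsa hsb hsab
        have hcomb : sa • (xstar + a) + sb • (xstar + b) = xstar + (sa • a + sb • b) := by
          rw [smul_add, smul_add]
          rw [show sa • xstar + sa • a + (sb • xstar + sb • b)
              = (sa • xstar + sb • xstar) + (sa • a + sb • b) by abel,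
            ← add_smul, hsab, one_smul]
        have hconv := hf.2 (Set.mem_univ (xstar + a)) (Set.mem_univ (xstar + b)) hsa hsb hsab
        rw [hcomb] at hconv
        simp only [smul_eq_mul] at hconv ⊢
        have hfx : sa * f xstar + sb * f xstar = f xstar := by
          rw [← add_mul, hsab, one_mul]
        linarith [hconv, hfx]
      obtain ⟨s, hs1, -⟩ := sandwich_sep (fun d => f (xstar + d) - f xstar)
        hfconv' (by simp) {0} (convex_singleton 0) rfl 0
        (by rintro d rfl; simp)
      refine ⟨s, ?_, w, ?_, ?_⟩
      · intro x
        have := hs1 (x - xstar)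
        rw [add_sub_cancel] at this
        linarith
      · refine mem_polarCone_of_feasible fun d hd => ?_
        have := hp2 d hd
        rw [hpz, inner_zero_left] at this
        exact this
      · rw [← hτ0, hwdef]; simp
    · -- τ > 0
      refine ⟨τ⁻¹ • p, ?_, w - p, ?_, ?_⟩
      · intro x
        have := hp1 (x - xstar)
        simp only [hgdef] at this
        rw [add_sub_cancel] at this
        rw [real_inner_smul_left]
        have h2 : τ⁻¹ * ⟪p, x - xstar⟫ ≤ τ⁻¹ * (τ * (f x - f xstar)) :=
          mul_le_mul_of_nonneg_left this (inv_pos.mpr hτpos).le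
        rw [← mul_assoc, inv_mul_cancel₀ hτpos.ne', one_mul] at h2
        linarith
      · refine mem_polarCone_of_feasible fun d hd => ?_
        have := hp2 d hd
        rw [inner_sub_left]
        linarith
      · rw [smul_smul, mul_inv_cancel₀ hτpos.ne', one_smul, hwdef]
        abel
  · rintro ⟨s, hs, u, hu, heq⟩
    have hwdec : w = τ • s + u := by rw [hwdef, ← heq]; abel
    -- gap inequality
    have hgap : ∀ x ∈ C, φ xstar + (1 / 2) * ‖x - xstar‖ ^ 2 ≤ φ x := by
      intro x hx
      have hd : x - xstar ∈ feasible C xstar := by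
        simp [feasible, add_sub_cancel, hx]
      have hdT : x - xstar ∈ tangentConeOf C xstar :=
        subset_closure ⟨1, zero_le_one, x - xstar, hd, (one_smul _ _).symm⟩
      have hus : ⟪u, x - xstar⟫ ≤ 0 := hu _ hdT
      have hsub := hs x
      have hτs : τ * ⟪s, x - xstar⟫ ≤ τ * (f x - f xstar) :=
        mul_le_mul_of_nonneg_left (by linarith) hτ
      have hexp := obj_expand τ f y xstar (x - xstar)
      rw [add_sub_cancel] at hexp
      simp only [hφ]
      rw [hexp]
      have hinner : ⟪y - xstar, x - xstar⟫ = τ * ⟪s, x - xstar⟫ + ⟪u, x - xstar⟫ := by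
        rw [← hwdef, hwdec, inner_add_left, real_inner_smul_left]
      rw [hinner]
      linarith
    constructor
    · intro x hx
      have := hgap x hx
      have h0 : (0:ℝ) ≤ (1/2) * ‖x - xstar‖ ^ 2 := by positivity
      simp only [Set.mem_setOf_eq]
      linarith
    · intro x hx hminx
      have h1 := hgap x hx
      have h2 : φ x ≤ φ xstar := hminx hxstar
      have h3 : ‖x - xstar‖ ^ 2 ≤ 0 := by linarith
      have h4 : ‖x - xstar‖ ^ 2 = 0 := le_antisymm h3 (by positivity)
      have h5 : x - xstar = 0 := by
        rw [pow_eq_zero_iff (two_ne_zero)] at h4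
        exact norm_eq_zero.mp h4
      exact sub_eq_zero.mp h5
end

section
/- Let f : ℝⁿ → ℝ be a convex function, x₀ ∈ ℝⁿ, τ ≥ 0, z ∈ ℝⁿ, and let x*(τ,z) be the unique minimizer over x of τ f(x) + (1/2)‖(x₀+z) − x‖₂². Let w₀ = Π(z, τ∂f(x₀)) and suppose τ ≤ C₀‖w₀‖₂ for some constant C₀ > 0. Let δ₀, ε₀ > 0 be such that 0 ≤ f(x₀+w) − f̂_{x₀}(x₀+w) ≤ δ₀‖w‖₂ for all w with ‖w‖₂ ≤ ε₀. Then whenever ‖w₀‖₂ ≤ ε₀, ‖x*(τ,z) − x₀‖₂ ≥ (1 − √(2δ₀C₀)) · dist(z, τ∂f(x₀)). -/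
open MeasureTheory ProbabilityTheory Filter Topology Metric
open scoped RealInnerProductSpace ENNReal Pointwise Matrix

section Aux

variable {E : Type*} [NormedAddCommGroup E] [InnerProductSpace ℝ E]

lemma subdiff_convex (f : E → ℝ) (x₀ : E) : Convex ℝ (subdiff f x₀) := by
  intro s₁ h₁ s₂ h₂ a b ha hb hab
  intro x
  have e1 := h₁ x
  have e2 := h₂ x
  have : ⟪a • s₁ + b • s₂, x - x₀⟫ = a * ⟪s₁, x - x₀⟫ + b * ⟪s₂, x - x₀⟫ := by
    rw [inner_add_left, real_inner_smul_left, real_inner_smul_left]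
  have h3 : a * f x + b * f x = f x := by rw [← add_mul, hab, one_mul]
  have h4 : a * f x₀ + b * f x₀ = f x₀ := by rw [← add_mul, hab, one_mul]
  nlinarith [mul_le_mul_of_nonneg_left e1 ha, mul_le_mul_of_nonneg_left e2 hb]

lemma subdiff_closed (f : E → ℝ) (x₀ : E) : IsClosed (subdiff f x₀) := by
  have : subdiff f x₀ = ⋂ x, {s : E | f x₀ + ⟪s, x - x₀⟫ ≤ f x} := by
    ext s; simp [subdiff, Set.mem_iInter]
  rw [this]
  exact isClosed_iInter fun x =>
    isClosed_le (continuous_const.add (continuous_id.inner continuous_const)) continuous_const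

lemma aux_sqrt_bound (a b t d c : ℝ) (ha : 0 ≤ a) (hb : 0 ≤ b) (hd : 0 < d) (hc : 0 < c)
    (h1 : (1 / 2) * a ^ 2 ≤ t * (d * b)) (h2 : t ≤ c * b) :
    a ≤ Real.sqrt (2 * d * c) * b := by
  have hkey2 : a ^ 2 ≤ 2 * d * c * b ^ 2 := by
    nlinarith [mul_le_mul_of_nonneg_right h2 (mul_nonneg hd.le hb)]
  have hcc : 0 ≤ 2 * d * c := by positivity
  have e1 : a = Real.sqrt (a ^ 2) := (Real.sqrt_sq ha).symm
  have e2 : Real.sqrt (2 * d * c * b ^ 2) = Real.sqrt (2 * d * c) * b := by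
    rw [Real.sqrt_mul hcc, Real.sqrt_sq hb]
  rw [e1, ← e2]
  exact Real.sqrt_le_sqrt hkey2

end Aux

/-- Deterministic lower bound on the proximal denoising error.
Let `w₀ = Π(z, τ∂f(x₀)) = z − Proj(z, τ∂f(x₀))`, suppose `τ ≤ C₀‖w₀‖` and that the
first-order approximation `f̂_{x₀}` satisfies `0 ≤ f(x₀+w) − f̂_{x₀}(x₀+w) ≤ δ₀‖w‖`
for all `‖w‖ ≤ ε₀`. If `‖w₀‖ ≤ ε₀`, then
`‖x*(τ,z) − x₀‖ ≥ (1 − √(2δ₀C₀)) dist(z, τ∂f(x₀))`. -/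
theorem statement10 {n : ℕ} (f : EuclideanSpace ℝ (Fin n) → ℝ)
    (hf : ConvexOn ℝ Set.univ f) (x₀ : EuclideanSpace ℝ (Fin n))
    (τ : ℝ) (hτ : 0 ≤ τ) (z : EuclideanSpace ℝ (Fin n))
    (xstar : EuclideanSpace ℝ (Fin n))
    (hmin : IsMinOn (fun x => τ * f x + (1 / 2) * ‖(x₀ + z) - x‖ ^ 2)
      Set.univ xstar)
    (C₀ : ℝ) (hC₀ : 0 < C₀)
    (hτle : τ ≤ C₀ * ‖z - projSet (τ • subdiff f x₀) z‖)
    (δ₀ ε₀ : ℝ) (hδ₀ : 0 < δ₀) (hε₀ : 0 < ε₀)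
    (happrox : ∀ w : EuclideanSpace ℝ (Fin n), ‖w‖ ≤ ε₀ →
      0 ≤ f (x₀ + w) - (f x₀ + sSup ((fun s => ⟪s, w⟫) '' subdiff f x₀)) ∧
      f (x₀ + w) - (f x₀ + sSup ((fun s => ⟪s, w⟫) '' subdiff f x₀)) ≤ δ₀ * ‖w‖)
    (hw₀ : ‖z - projSet (τ • subdiff f x₀) z‖ ≤ ε₀) :
    (1 - Real.sqrt (2 * δ₀ * C₀)) * Metric.infDist z (τ • subdiff f x₀) ≤
      ‖xstar - x₀‖ := by
  set K := τ • subdiff f x₀ with hK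
  rcases Set.eq_empty_or_nonempty (subdiff f x₀) with hemp | hne
  · -- subdifferential empty: K empty, infDist = 0
    have : K = ∅ := by rw [hK, hemp, Set.smul_set_empty]
    rw [this, Metric.infDist_empty, mul_zero]
    exact norm_nonneg _
  rcases eq_or_lt_of_le hτ with h0 | hτpos
  · -- τ = 0
    have hτ0 : τ = 0 := h0.symm
    have hK0 : K = {0} := by
      rw [hK, hτ0, Set.zero_smul_set hne]; rfl
    have hxs : xstar = x₀ + z := by
      have := isMinOn_iff.mp hmin (x₀ + z) (Set.mem_univ _)
      simp only [hτ0, zero_mul, zero_add, sub_self, norm_zero] at this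
      have h2 : ‖(x₀ + z) - xstar‖ ^ 2 ≤ 0 := by nlinarith
      have h3 : ‖(x₀ + z) - xstar‖ = 0 := by
        nlinarith [norm_nonneg ((x₀ + z) - xstar)]
      have := norm_eq_zero.mp h3
      have := sub_eq_zero.mp this
      exact this.symm
    rw [hK0, Metric.infDist_singleton, hxs]
    have : x₀ + z - x₀ = z := by abel
    rw [this, dist_zero_right]
    nlinarith [Real.sqrt_nonneg (2 * δ₀ * C₀), norm_nonneg z]
  · -- τ > 0 : main case
    have hKconv : Convex ℝ K := (subdiff_convex f x₀).smul τ
    have hKclosed : IsClosed K := (subdiff_closed f x₀).smul_of_ne_zero (ne_of_gt hτpos)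
    have hKne : K.Nonempty := hne.smul_set
    have hex : ∃ y ∈ K, dist z y = Metric.infDist z K := by
      obtain ⟨y, hy, h⟩ := hKclosed.exists_infDist_eq_dist hKne z
      exact ⟨y, hy, h.symm⟩
    set p := projSet K z with hp
    have hpK : p ∈ K ∧ dist z p = Metric.infDist z K := by
      rw [hp, projSet, dif_pos hex]
      exact ⟨hex.choose_spec.1, hex.choose_spec.2⟩
    clear_value p
    set w₀ : EuclideanSpace ℝ (Fin n) := z - p with hw₀def
    set ws : EuclideanSpace ℝ (Fin n) := xstar - x₀ with hwsdef
    -- projection characterization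
    have hnorm_inf : ‖z - p‖ = ⨅ w : K, ‖z - w‖ := by
      have h1 : dist z p = ‖z - p‖ := dist_eq_norm z p
      rw [← h1, hpK.2, Metric.infDist_eq_iInf]
      simp only [dist_eq_norm]
    have hproj : ∀ v ∈ K, ⟪z - p, v - p⟫ ≤ 0 :=
      (norm_eq_iInf_iff_real_inner_le_zero hKconv hpK.1).mp hnorm_inf
    -- express p as τ • s₀
    obtain ⟨s₀, hs₀, hps₀⟩ := Set.mem_smul_set.mp hpK.1
    -- bound on sSup
    set S := sSup ((fun s => ⟪s, w₀⟫) '' subdiff f x₀) with hSdef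
    have hS : S ≤ ⟪s₀, w₀⟫ := by
      apply csSup_le (hne.image _)
      rintro b ⟨s', hs', rfl⟩
      have h1 : ⟪z - p, (τ • s') - p⟫ ≤ 0 := hproj _ (Set.smul_mem_smul_set hs')
      have h2 : (τ • s') - p = τ • (s' - s₀) := by rw [← hps₀, smul_sub]
      rw [h2, real_inner_smul_right] at h1
      have h3 : ⟪z - p, s' - s₀⟫ ≤ 0 := nonpos_of_mul_nonpos_right h1 hτpos
      rw [inner_sub_right] at h3
      have h4 : ⟪z - p, s'⟫ ≤ ⟪z - p, s₀⟫ := by linarith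
      have c1 : ⟪s', w₀⟫ = ⟪z - p, s'⟫ := real_inner_comm _ _
      have c2 : ⟪s₀, w₀⟫ = ⟪z - p, s₀⟫ := real_inner_comm _ _
      show ⟪s', w₀⟫ ≤ ⟪s₀, w₀⟫
      rw [c1, c2]; exact h4
    -- optimality comparison at x₀ + w₀
    have hcmp := isMinOn_iff.mp hmin (x₀ + w₀) (Set.mem_univ _)
    have hzw : (x₀ + z) - (x₀ + w₀) = p := by
      rw [hw₀def]; abel
    have hzs : (x₀ + z) - xstar = z - ws := by rw [hwsdef]; abel
    rw [hzw, hzs] at hcmp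
    -- subgradient at xstar
    have hA : f x₀ + ⟪s₀, ws⟫ ≤ f xstar := by
      have := hs₀ xstar; rw [← hwsdef] at this; exact this
    have hAτ : τ * f x₀ + ⟪p, ws⟫ ≤ τ * f xstar := by
      have h1 := mul_le_mul_of_nonneg_left hA hτ
      rw [mul_add] at h1
      have hpe : ⟪p, ws⟫ = τ * ⟪s₀, ws⟫ := by rw [← hps₀, real_inner_smul_left]
      rw [hpe]
      linarith
    -- first-order approximation bound
    have hB := (happrox w₀ hw₀).2
    have hBτ : τ * f (x₀ + w₀) ≤ τ * f x₀ + ⟪p, w₀⟫ + τ * (δ₀ * ‖w₀‖) := by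
      have h1 : f (x₀ + w₀) ≤ f x₀ + S + δ₀ * ‖w₀‖ := by rw [← hSdef] at hB; linarith
      have h2 := mul_le_mul_of_nonneg_left h1 hτ
      rw [mul_add, mul_add] at h2
      have h3 : τ * S ≤ ⟪p, w₀⟫ := by
        have h4 := mul_le_mul_of_nonneg_left hS hτ
        rw [← hps₀, real_inner_smul_left]; linarith
      linarith
    -- norm expansion : z - ws = p + (w₀ - ws)
    have hdecomp : z - ws = p + (w₀ - ws) := by rw [hw₀def]; abel
    have hexp : ‖z - ws‖ ^ 2 = ‖p‖ ^ 2 + 2 * ⟪p, w₀ - ws⟫ + ‖w₀ - ws‖ ^ 2 := by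
      rw [hdecomp]; exact norm_add_sq_real p (w₀ - ws)
    have hinner : ⟪p, w₀ - ws⟫ = ⟪p, w₀⟫ - ⟪p, ws⟫ := inner_sub_right p w₀ ws
    -- combine
    have hkey : (1 / 2) * ‖w₀ - ws‖ ^ 2 ≤ τ * (δ₀ * ‖w₀‖) := by
      rw [hexp, hinner] at hcmp
      linarith
    -- use hτle
    have hτle' : τ ≤ C₀ * ‖w₀‖ := hτle
    clear_value w₀ ws
    have hb0 : (0:ℝ) ≤ ‖w₀‖ := norm_nonneg _
    have ha0 : (0:ℝ) ≤ ‖w₀ - ws‖ := norm_nonneg _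
    have hsqrtle : ‖w₀ - ws‖ ≤ Real.sqrt (2 * δ₀ * C₀) * ‖w₀‖ :=
      aux_sqrt_bound _ _ τ δ₀ C₀ ha0 hb0 hδ₀ hC₀ hkey hτle'
    have htri : ‖w₀‖ ≤ ‖ws‖ + ‖w₀ - ws‖ := norm_le_norm_add_norm_sub' w₀ ws
    have hinf : Metric.infDist z K = ‖w₀‖ := by
      rw [← hpK.2, dist_eq_norm, hw₀def]
    rw [hinf]
    have hexpand : (1 - Real.sqrt (2 * δ₀ * C₀)) * ‖w₀‖
        = ‖w₀‖ - Real.sqrt (2 * δ₀ * C₀) * ‖w₀‖ := by ring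
    rw [hexpand]
    linarith
end

section
/- Let C ⊆ ℝⁿ be a nonempty, closed and convex set with x₀ ∈ C, and let v be a standard Gaussian vector on ℝⁿ. For σ > 0 let x*(σv) = Proj(x₀ + σv, C) be the projection of x₀+σv onto C, and set w*(σv) = x*(σv) − x₀. Then lim_{σ→0} E[‖σv − w*(σv)‖₂²]/σ² = D(T_C(x₀)), i.e. the normalized residual of the constrained denoiser converges to the mean squared distance of a standard Gaussian vector to the tangent cone T_C(x₀). -/
open MeasureTheory ProbabilityTheory Filter Topology Metric
open scoped RealInnerProductSpace ENNReal Pointwise Matrix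

/-! Since the projection is a nearest point, the residual `σv − w*(σv)` has norm
`dist(x₀ + σv, C) = σ · dist(v, σ⁻¹(C − x₀))`, so the normalized residual is
`E[dist(v, σ⁻¹(C − x₀))²]`. By convexity and `x₀ ∈ C` the sets `σ⁻¹(C − x₀)` increase as `σ ↓ 0`
to the cone of feasible directions, whose closure is `T_C(x₀)`; hence the distances converge
pointwise to `dist(v, T_C(x₀))`. They are dominated by `‖v‖²` because every set contains `0`,
and dominated convergence gives the limit. -/

lemma infDist_sq_le_norm_sq {E : Type*} [SeminormedAddCommGroup E] {S : Set E} (hS : 0 ∈ S)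
    (x : E) : infDist x S ^ 2 ≤ ‖x‖ ^ 2 := by
  gcongr
  · exact infDist_nonneg
  simpa using infDist_le_dist_of_mem (x := x) hS

lemma image_add_feasible {E : Type*} [NormedAddCommGroup E] {C : Set E} {x₀ : E} :
    (x₀ + ·) '' feasible C x₀ = C :=
  Set.image_preimage_eq C (add_left_surjective x₀)

lemma dist_projSet_eq_infDist {E : Type*} [NormedAddCommGroup E] [ProperSpace E] {C : Set E}
    (hC : IsClosed C) (hne : C.Nonempty) (x : E) :
    dist x (projSet C x) = infDist x C := by
  have h : ∃ y ∈ C, dist x y = infDist x C := by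
    obtain ⟨y, hy, hyd⟩ := hC.exists_infDist_eq_dist hne x
    exact ⟨y, hy, hyd.symm⟩
  rw [projSet, dif_pos h]
  exact h.choose_spec.2

section ScaledFeasible

variable {E : Type*} [NormedAddCommGroup E] [NormedSpace ℝ E] {C : Set E} {x₀ : E} {σ τ : ℝ}

/-- The blown-up set `σ⁻¹ • (C - x₀)`. -/
def scaledFeasible (C : Set E) (x₀ : E) (σ : ℝ) : Set E := {z | x₀ + σ • z ∈ C}

lemma zero_mem_scaledFeasible (hx₀ : x₀ ∈ C) (σ : ℝ) : (0 : E) ∈ scaledFeasible C x₀ σ := by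
  simpa [scaledFeasible] using hx₀

lemma scaledFeasible_subset_of_le (hC : Convex ℝ C) (hx₀ : x₀ ∈ C) (hσ : 0 < σ) (hστ : σ ≤ τ) :
    scaledFeasible C x₀ τ ⊆ scaledFeasible C x₀ σ := by
  intro z hz
  have hτ : 0 < τ := hσ.trans_le hστ
  have h := hC.add_smul_mem hx₀ hz ⟨div_nonneg hσ.le hτ.le, (div_le_one hτ).2 hστ⟩
  rwa [smul_smul, div_mul_cancel₀ σ hτ.ne'] at h

lemma smul_scaledFeasible (hσ : σ ≠ 0) : σ • scaledFeasible C x₀ σ = feasible C x₀ := by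
  ext y
  simp [Set.mem_smul_set_iff_inv_smul_mem₀ hσ, scaledFeasible, feasible, smul_inv_smul₀ hσ]

lemma infDist_add_smul (hσ : 0 < σ) (w : E) :
    infDist (x₀ + σ • w) C = σ * infDist w (scaledFeasible C x₀ σ) := by
  calc infDist (x₀ + σ • w) C
      = infDist (x₀ + σ • w) ((x₀ + ·) '' (σ • scaledFeasible C x₀ σ)) := by
        rw [smul_scaledFeasible hσ.ne', image_add_feasible]
    _ = infDist (σ • w) (σ • scaledFeasible C x₀ σ) := infDist_image (isometry_add_left x₀)
    _ = σ * infDist w (scaledFeasible C x₀ σ) := by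
        rw [infDist_smul₀ hσ.ne', Real.norm_of_nonneg hσ.le]

lemma norm_smul_sub_projSet_sub [ProperSpace E] (hC : IsClosed C) (hx₀ : x₀ ∈ C) (hσ : 0 < σ)
    (w : E) :
    ‖σ • w - (projSet C (x₀ + σ • w) - x₀)‖ = σ * infDist w (scaledFeasible C x₀ σ) := by
  rw [show σ • w - (projSet C (x₀ + σ • w) - x₀) = x₀ + σ • w - projSet C (x₀ + σ • w) by abel,
    ← dist_eq_norm, dist_projSet_eq_infDist hC ⟨x₀, hx₀⟩, infDist_add_smul hσ]

end ScaledFeasible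

section TangentCone

variable {E : Type*} [NormedAddCommGroup E] [InnerProductSpace ℝ E] {C : Set E} {x₀ : E} {σ : ℝ}

lemma scaledFeasible_subset_coneOf (hσ : 0 < σ) :
    scaledFeasible C x₀ σ ⊆ coneOf (feasible C x₀) :=
  fun z hz => ⟨σ⁻¹, inv_nonneg.2 hσ.le, σ • z, hz, (inv_smul_smul₀ hσ.ne' z).symm⟩

lemma exists_mem_scaledFeasible_of_mem_coneOf (hx₀ : x₀ ∈ C) {y : E}
    (hy : y ∈ coneOf (feasible C x₀)) : ∃ σ > 0, y ∈ scaledFeasible C x₀ σ := by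
  obtain ⟨c, hc, x, hx, rfl⟩ := hy
  rcases hc.eq_or_lt with rfl | hc
  · exact ⟨1, one_pos, by simpa using zero_mem_scaledFeasible hx₀ 1⟩
  · exact ⟨c⁻¹, inv_pos.2 hc, by simpa [scaledFeasible, feasible, smul_smul, hc.ne'] using hx⟩

lemma tendsto_infDist_scaledFeasible (hC : Convex ℝ C) (hx₀ : x₀ ∈ C) (w : E) :
    Tendsto (fun σ => infDist w (scaledFeasible C x₀ σ)) (𝓝[>] 0)
      (𝓝 (infDist w (tangentConeOf C x₀))) := by
  rw [tangentConeOf, infDist_closure]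
  refine tendsto_order.2 ⟨fun b hb => ?_, fun b hb => ?_⟩
  · filter_upwards [self_mem_nhdsWithin] with σ hσ
    exact hb.trans_le (infDist_le_infDist_of_subset (scaledFeasible_subset_coneOf hσ)
      ⟨0, zero_mem_scaledFeasible hx₀ σ⟩)
  · have hne : (coneOf (feasible C x₀)).Nonempty :=
      ⟨0, scaledFeasible_subset_coneOf one_pos (zero_mem_scaledFeasible hx₀ 1)⟩
    obtain ⟨y, hy, hyb⟩ := (infDist_lt_iff hne).1 hb
    obtain ⟨τ, hτ, hyτ⟩ := exists_mem_scaledFeasible_of_mem_coneOf hx₀ hy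
    filter_upwards [Ioo_mem_nhdsGT hτ] with σ hσ
    have hyσ := scaledFeasible_subset_of_le hC hx₀ hσ.1 hσ.2.le hyτ
    exact (infDist_le_dist_of_mem hyσ).trans_lt hyb

end TangentCone

lemma memLp_id_stdGaussian (n : ℕ) : MemLp id 2 (stdGaussian n) := by
  rw [_root_.stdGaussian, memLp_map_measure_iff (by fun_prop) (by fun_prop)]
  exact MemLp.of_eval_piLp fun i =>
    (memLp_id_gaussianReal 2).comp_measurePreserving (measurePreserving_eval _ i)

theorem statement12_general {n : ℕ} (C : Set (EuclideanSpace ℝ (Fin n)))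
    (hCcl : IsClosed C) (hCconv : Convex ℝ C)
    (x₀ : EuclideanSpace ℝ (Fin n)) (hx₀ : x₀ ∈ C) :
    Tendsto
      (fun σ : ℝ =>
        (∫ w, ‖σ • w - (projSet C (x₀ + σ • w) - x₀)‖ ^ 2 ∂(stdGaussian n)) / σ ^ 2)
      (nhdsWithin 0 (Set.Ioi 0)) (nhds (msd n (tangentConeOf C x₀))) := by
  have hlim : Tendsto (fun σ => ∫ w, infDist w (scaledFeasible C x₀ σ) ^ 2 ∂(stdGaussian n))
      (𝓝[>] 0) (𝓝 (msd n (tangentConeOf C x₀))) :=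
    tendsto_integral_filter_of_dominated_convergence (fun w => ‖w‖ ^ 2)
      (.of_forall fun _ => ((continuous_infDist_pt _).pow 2).aestronglyMeasurable)
      (.of_forall fun σ => ae_of_all _ fun w => by
        simpa only [Real.norm_of_nonneg (sq_nonneg _)] using
          infDist_sq_le_norm_sq (zero_mem_scaledFeasible hx₀ σ) w)
      (memLp_id_stdGaussian n).norm.integrable_sq
      (ae_of_all _ fun w => (tendsto_infDist_scaledFeasible hCconv hx₀ w).pow 2)
  refine hlim.congr' ?_
  filter_upwards [self_mem_nhdsWithin] with σ (hσ : 0 < σ)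
  simp_rw [norm_smul_sub_projSet_sub hCcl hx₀ hσ, mul_pow, integral_const_mul]
  field_simp

/-- Residual of the constrained denoiser in the small-noise limit.
With `x*(σv) = Proj(x₀ + σv, C)` and `w*(σv) = x*(σv) − x₀`, one has
`lim_{σ→0} E‖σv − w*(σv)‖²/σ² = D(T_C(x₀))`. -/
theorem statement12 {n : ℕ} (C : Set (EuclideanSpace ℝ (Fin n)))
    (hCne : C.Nonempty) (hCcl : IsClosed C) (hCconv : Convex ℝ C)
    (x₀ : EuclideanSpace ℝ (Fin n)) (hx₀ : x₀ ∈ C) :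
    Tendsto
      (fun σ : ℝ =>
        (∫ w, ‖σ • w - (projSet C (x₀ + σ • w) - x₀)‖ ^ 2 ∂(stdGaussian n)) / σ ^ 2)
      (nhdsWithin 0 (Set.Ioi 0)) (nhds (msd n (tangentConeOf C x₀))) :=
  statement12_general C hCcl hCconv x₀ hx₀
end
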